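/- arXiv:0911.2960 — 2 statements merged into one kernel-verified Lean document; each statement's English description precedes it below -/
import Mathlib

section
/- Fix an integer k ≥ 3, an integer ℓ ≥ 0, and ν ∈ W_{k−1}. Then σ^{ν;*}_{k,2ℓ} = Σ_{h=0}^{ℓ} (−1)^h · C(ℓ,h) · ω^ν_{k,2(ℓ−h)+1}, where C(ℓ,h) is the binomial coefficient. -/
/-
Group a `ℬ`-walk of even length into step pairs `(+e_i, -e_j)`. Counting walks by their first
pair writes the numbers of all, resp. loop-free, `ℬ_W`-walks with `ℓ` pairs from `δ` as the
`ℓ`-th powers of transfer operators `T`, resp. `T*`, acting on functions on `ℤ^{k-1}`. The loop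
pair `(+e_1, -e_1)` is available from every point of `W` and returns to it, so `T = T* + R`
with `R` the restriction to `W`, which commutes with `T`. Hence
`T*^ℓ = (T - R)^ℓ = ∑ (-1)^h C(ℓ,h) R^h T^{ℓ-h}`, and `R` acts trivially at `δ ∈ W`.
Finally a `𝒫_W`-walk of length `2m+1` must begin with the null step `-e_0`, so
`ω^ν_{k,2m+1} = σ^ν_{k,2m}`.
-/

open Finset

/-- Lattice points in `ℤ^(k-1)`; coordinate `i : Fin (k-1)` represents `ν_{i+1}`. -/
abbrev Pt (k : ℕ) := Fin (k - 1) → ℤ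

/-- The starting point `δ = (k-2, k-3, …, 1, 0)`. -/
def delta (k : ℕ) : Pt k := fun i => (k : ℤ) - 2 - (i : ℤ)

/-- Membership in `Q_{k-1}`: all coordinates nonnegative. -/
def inQ {k : ℕ} (v : Pt k) : Prop := ∀ i, 0 ≤ v i

/-- Membership in `W_{k-1}`: `ν_1 > ν_2 > ⋯ > ν_{k-1} ≥ 0`. -/
def inW {k : ℕ} (v : Pt k) : Prop := StrictAnti v ∧ ∀ i, 0 ≤ v i

/-- `eVec k i` is `e_i`: `e_0 = 0` and for `1 ≤ i ≤ k-1`, `e_i` is the `i`-th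
standard basis vector of `ℤ^(k-1)`. -/
def eVec (k : ℕ) (i : Fin k) : Pt k := fun j => if (j : ℕ) + 1 = (i : ℕ) then 1 else 0

/-- The vector `e_1`. -/
def eOne (k : ℕ) : Pt k := fun j => if (j : ℕ) = 0 then 1 else 0

/-- A step in `{+e_i : 0 ≤ i ≤ k-1}`. -/
def plusStep {k : ℕ} (d : Pt k) : Prop := ∃ i : Fin k, d = eVec k i

/-- A step in `{-e_i : 0 ≤ i ≤ k-1}`. -/
def minusStep {k : ℕ} (d : Pt k) : Prop := ∃ i : Fin k, d = -eVec k i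

/-- A `𝒫_D`-walk of length `ℓ`: starts at `δ`, stays in `D`, odd steps are `-e_i`,
even steps are `+e_i`. -/
def IsPWalk {k : ℕ} (D : Pt k → Prop) (ℓ : ℕ) (v : Fin (ℓ + 1) → Pt k) : Prop :=
  v ⟨0, Nat.succ_pos ℓ⟩ = delta k ∧ (∀ t, D (v t)) ∧
    ∀ t : ℕ, ∀ h : t + 1 < ℓ + 1,
      (Odd (t + 1) → minusStep (v ⟨t + 1, h⟩ - v ⟨t, by omega⟩)) ∧
      (Even (t + 1) → plusStep (v ⟨t + 1, h⟩ - v ⟨t, by omega⟩))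

/-- A `ℬ_D`-walk of length `ℓ`: starts at `δ`, stays in `D`, odd steps are `+e_i`,
even steps are `-e_i`. -/
def IsBWalk {k : ℕ} (D : Pt k → Prop) (ℓ : ℕ) (v : Fin (ℓ + 1) → Pt k) : Prop :=
  v ⟨0, Nat.succ_pos ℓ⟩ = delta k ∧ (∀ t, D (v t)) ∧
    ∀ t : ℕ, ∀ h : t + 1 < ℓ + 1,
      (Odd (t + 1) → plusStep (v ⟨t + 1, h⟩ - v ⟨t, by omega⟩)) ∧
      (Even (t + 1) → minusStep (v ⟨t + 1, h⟩ - v ⟨t, by omega⟩))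

/-- A walk is loop-free if no odd/even step pair `(+e_1, -e_1)` occurs. -/
def LoopFree {k ℓ : ℕ} (v : Fin (ℓ + 1) → Pt k) : Prop :=
  ∀ q : ℕ, 1 ≤ q → ∀ h : 2 * q < ℓ + 1,
    ¬ (v ⟨2 * q - 1, by omega⟩ - v ⟨2 * q - 2, by omega⟩ = eOne k ∧
       v ⟨2 * q, h⟩ - v ⟨2 * q - 1, by omega⟩ = -eOne k)

/-- `a^ν_{k,ℓ}`: the number of `𝒫_{Q_{k-1}}`-walks of length `ℓ` ending at `ν`. -/
noncomputable def aCount (k ℓ : ℕ) (ν : Pt k) : ℕ :=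
  Nat.card {v : Fin (ℓ + 1) → Pt k //
    IsPWalk (inQ (k := k)) ℓ v ∧ v (Fin.last ℓ) = ν}

/-- `ω^ν_{k,ℓ}`: the number of `𝒫_{W_{k-1}}`-walks of length `ℓ` ending at `ν`. -/
noncomputable def omegaCount (k ℓ : ℕ) (ν : Pt k) : ℕ :=
  Nat.card {v : Fin (ℓ + 1) → Pt k //
    IsPWalk (inW (k := k)) ℓ v ∧ v (Fin.last ℓ) = ν}

/-- `σ^ν_{k,ℓ}`: the number of `ℬ_{W_{k-1}}`-walks of length `ℓ` ending at `ν`. -/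
noncomputable def sigmaCount (k ℓ : ℕ) (ν : Pt k) : ℕ :=
  Nat.card {v : Fin (ℓ + 1) → Pt k //
    IsBWalk (inW (k := k)) ℓ v ∧ v (Fin.last ℓ) = ν}

/-- `σ^{ν;*}_{k,ℓ}`: the number of loop-free `ℬ_{W_{k-1}}`-walks of length `ℓ`
ending at `ν`. -/
noncomputable def sigmaStarCount (k ℓ : ℕ) (ν : Pt k) : ℕ :=
  Nat.card {v : Fin (ℓ + 1) → Pt k //
    IsBWalk (inW (k := k)) ℓ v ∧ LoopFree v ∧ v (Fin.last ℓ) = ν}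

/-- `(a,b)` is an arc of the standard representation of the partition `P`:
`a < b`, `a` and `b` lie in a common block `B`, and no element of `B` lies
strictly between them. -/
def IsArc {N : ℕ} (P : Finpartition (Finset.univ : Finset (Fin N))) (a b : Fin N) : Prop :=
  a < b ∧ ∃ B ∈ P.parts, a ∈ B ∧ b ∈ B ∧ ∀ c ∈ B, ¬(a < c ∧ c < b)

/-- The partition `P` has a `k`-crossing: arcs `(i₁,j₁),…,(i_k,j_k)` with
`i₁ < ⋯ < i_k < j₁ < ⋯ < j_k`. -/
def PartitionHasKCrossing {N : ℕ} (k : ℕ)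
    (P : Finpartition (Finset.univ : Finset (Fin N))) : Prop :=
  ∃ ii jj : Fin k → Fin N, (∀ m, IsArc P (ii m) (jj m)) ∧
    StrictMono ii ∧ StrictMono jj ∧ ∀ m m', ii m < jj m'

/-- The partition `P` is `2`-regular: distinct elements of a common block differ
by at least `2`. -/
def TwoRegular {N : ℕ} (P : Finpartition (Finset.univ : Finset (Fin N))) : Prop :=
  ∀ B ∈ P.parts, ∀ x ∈ B, ∀ y ∈ B, x ≠ y → 2 ≤ |((x : ℕ) : ℤ) - ((y : ℕ) : ℤ)|

/-- A braid over `[N]`, given by its arc set: arcs `(i,j)` with `i ≤ j` (loops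
allowed), each vertex is the smaller endpoint of at most one arc and the larger
endpoint of at most one arc. -/
def IsBraid {N : ℕ} (A : Finset (Fin N × Fin N)) : Prop :=
  (∀ p ∈ A, p.1 ≤ p.2) ∧ (∀ p ∈ A, ∀ q ∈ A, p.1 = q.1 → p = q) ∧
    (∀ p ∈ A, ∀ q ∈ A, p.2 = q.2 → p = q)

/-- The braid with arc set `A` has a `k`-crossing: arcs `(i₁,j₁),…,(i_k,j_k)`
with `i₁ < ⋯ < i_k ≤ j₁ < ⋯ < j_k`. -/
def BraidHasKCrossing {N : ℕ} (k : ℕ) (A : Finset (Fin N × Fin N)) : Prop :=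
  ∃ ii jj : Fin k → Fin N, (∀ m, (ii m, jj m) ∈ A) ∧
    StrictMono ii ∧ StrictMono jj ∧ ∀ m m', ii m ≤ jj m'

/-- A braid is loop-free if it has no arc `(i,i)`. -/
def BraidLoopFree {N : ℕ} (A : Finset (Fin N × Fin N)) : Prop :=
  ∀ p ∈ A, p.1 ≠ p.2

section Vectors
variable {k : ℕ}

theorem eVec_injective : Function.Injective (eVec k) := by
  intro i i' h
  by_contra hne
  have hne' : (i : ℕ) ≠ i' := Fin.val_ne_of_ne hne
  obtain ⟨j, hj⟩ : ∃ j : Fin (k - 1), (j : ℕ) + 1 = i ∨ (j : ℕ) + 1 = i' := by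
    rcases Nat.eq_zero_or_pos i with h0 | h0
    · exact ⟨⟨i' - 1, by omega⟩, Or.inr (by simp only; omega)⟩
    · exact ⟨⟨i - 1, by omega⟩, Or.inl (by simp only; omega)⟩
  have := congrFun h j
  simp only [eVec] at this
  split_ifs at this <;> omega

theorem eVec_of_val_eq_zero {i : Fin k} (hi : (i : ℕ) = 0) : eVec k i = 0 := by
  funext j
  simp [eVec, hi]

theorem eVec_one (hk : 2 ≤ k) : eVec k ⟨1, hk⟩ = eOne k := by
  funext j
  simp [eVec, eOne]

theorem inW_delta (k : ℕ) : inW (delta k) := by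
  refine ⟨fun a b hab => ?_, fun i => ?_⟩
  · have : (a : ℕ) < b := hab
    simp only [delta]
    omega
  · have := i.isLt
    simp only [delta]
    omega

theorem inW_add_eOne {u : Pt k} (hu : inW u) : inW (u + eOne k) := by
  refine ⟨fun a b hab => ?_, fun i => ?_⟩
  · have := hu.1 hab
    have : (a : ℕ) < b := hab
    simp only [Pi.add_apply, eOne]
    split_ifs <;> omega
  · have := hu.2 i
    simp only [Pi.add_apply, eOne]
    split_ifs <;> omega

theorem eVec_eq_zero_of_inW_delta_sub {i : Fin k} (h : inW (delta k - eVec k i)) :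
    eVec k i = 0 := by
  rcases Nat.eq_zero_or_pos i with h0 | h0
  · exact eVec_of_val_eq_zero h0
  exfalso
  have hs : (i : ℕ) - 1 < k - 1 := by omega
  have hval : ∀ j : Fin (k - 1), (delta k - eVec k i) j =
      k - 2 - j - if (j : ℕ) + 1 = i then 1 else 0 := fun j => rfl
  by_cases hlast : (i : ℕ) < k - 1
  · have := h.1 (show (⟨i - 1, hs⟩ : Fin (k - 1)) < ⟨i, hlast⟩ from Fin.mk_lt_mk.2 (by omega))
    rw [hval, hval] at this
    simp only at this
    split_ifs at this <;> omega
  · have := h.2 ⟨i - 1, hs⟩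
    rw [hval] at this
    simp only at this
    split_ifs at this <;> omega

theorem eq_delta_of_minusStep {v : Pt k} (h : minusStep (v - delta k)) (hv : inW v) :
    v = delta k := by
  obtain ⟨i, hi⟩ := h
  have hv' : v = delta k - eVec k i := by rw [sub_eq_add_neg, ← hi]; abel
  rw [hv', eVec_eq_zero_of_inW_delta_sub (hv' ▸ hv), sub_zero]

end Vectors

section Steps
variable {k : ℕ}

theorem forall_cons_iff {α : Type*} {n : ℕ} (P : α → Prop) (a : α) (v : Fin n → α) :
    (∀ t, P ((Fin.cons a v : Fin (n + 1) → α) t)) ↔ P a ∧ ∀ t, P (v t) := by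
  simp only [Fin.forall_fin_succ, Fin.cons_zero, Fin.cons_succ]

def Alternates (f g : Pt k → Prop) {n : ℕ} (v : Fin (n + 1) → Pt k) : Prop :=
  ∀ t : ℕ, ∀ h : t + 1 < n + 1,
    (Odd (t + 1) → f (v ⟨t + 1, h⟩ - v ⟨t, by omega⟩)) ∧
    (Even (t + 1) → g (v ⟨t + 1, h⟩ - v ⟨t, by omega⟩))

theorem isPWalk_iff {D : Pt k → Prop} {ℓ : ℕ} {v : Fin (ℓ + 1) → Pt k} :
    IsPWalk D ℓ v ↔ v 0 = delta k ∧ (∀ t, D (v t)) ∧ Alternates minusStep plusStep v :=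
  Iff.rfl

theorem isBWalk_iff {D : Pt k → Prop} {ℓ : ℕ} {v : Fin (ℓ + 1) → Pt k} :
    IsBWalk D ℓ v ↔ v 0 = delta k ∧ (∀ t, D (v t)) ∧ Alternates plusStep minusStep v :=
  Iff.rfl

theorem alternates_cons {f g : Pt k → Prop} {n : ℕ} (a : Pt k) (v : Fin (n + 1) → Pt k) :
    Alternates f g (Fin.cons a v : Fin (n + 2) → Pt k) ↔ f (v 0 - a) ∧ Alternates g f v := by
  constructor
  · intro h
    have h0 := h 0 (by omega)
    refine ⟨h0.1 odd_one, fun t ht => ?_⟩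
    have := h (t + 1) (by omega)
    exact ⟨fun ho => this.2 ho.add_one, fun he => this.1 he.add_one⟩
  · rintro ⟨h0, h⟩ (_ | t) ht
    · exact ⟨fun _ => h0, fun he => absurd he (by decide)⟩
    · have := h t (by omega)
      refine ⟨fun ho => this.2 ?_, fun he => this.1 ?_⟩
      · exact Nat.not_odd_iff_even.1 (Nat.odd_add_one.1 ho)
      · exact Nat.not_even_iff_odd.1 (Nat.even_add_one.1 he)

theorem loopFree_cons_cons {n : ℕ} (a b : Pt k) (w : Fin (n + 1) → Pt k) :
    LoopFree (Fin.cons a (Fin.cons b w) : Fin (n + 3) → Pt k) ↔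
      ¬(b - a = eOne k ∧ w 0 - b = -eOne k) ∧ LoopFree w := by
  constructor
  · intro h
    have h1 := h 1 le_rfl (by omega)
    refine ⟨h1, fun q hq hq' => ?_⟩
    obtain ⟨r, rfl⟩ : ∃ r, q = r + 1 := ⟨q - 1, by omega⟩
    exact h (r + 2) (by omega) (by omega)
  · rintro ⟨h1, h⟩ (_ | _ | r) hq hq'
    · omega
    · exact h1
    · exact h (r + 1) (by omega) (by omega)

theorem loopFree_of_length_zero (v : Fin 1 → Pt k) : LoopFree v :=
  fun q hq h => absurd h (by omega)

end Steps

section Walks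
variable {k : ℕ} (D : Pt k → Prop)

def IsBWalkFromTo (loopFree : Bool) (u ν : Pt k) (m : ℕ) (v : Fin (2 * m + 1) → Pt k) : Prop :=
  v 0 = u ∧ (∀ t, D (v t)) ∧ Alternates plusStep minusStep v ∧ (loopFree → LoopFree v) ∧
    v (Fin.last _) = ν

noncomputable def bWalkCount (loopFree : Bool) (ν : Pt k) (m : ℕ) (u : Pt k) : ℤ :=
  Nat.card {v // IsBWalkFromTo D loopFree u ν m v}

def nextPt (u : Pt k) (p : Fin k × Fin k) : Pt k := u + eVec k p.1 - eVec k p.2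

def IsLoopPair (p : Fin k × Fin k) : Prop := eVec k p.1 = eOne k ∧ eVec k p.2 = eOne k

/-- `p = (i, j)` stands for the step pair `(+e_i, -e_j)`. -/
noncomputable def admissiblePairs (loopFree : Bool) (u : Pt k) : Finset (Fin k × Fin k) :=
  open scoped Classical in
  univ.filter fun p => (loopFree → ¬IsLoopPair p) ∧ D u ∧ D (u + eVec k p.1) ∧ D (nextPt u p)

variable {D}

theorem mem_admissiblePairs {loopFree : Bool} {u : Pt k} {p : Fin k × Fin k} :
    p ∈ admissiblePairs D loopFree u ↔
      (loopFree → ¬IsLoopPair p) ∧ D u ∧ D (u + eVec k p.1) ∧ D (nextPt u p) := by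
  simp [admissiblePairs]

theorem isBWalkFromTo_cons_cons {loopFree : Bool} {u ν : Pt k} {m : ℕ} (a b : Pt k)
    (w : Fin (2 * m + 1) → Pt k) :
    IsBWalkFromTo D loopFree u ν (m + 1) (Fin.cons a (Fin.cons b w)) ↔
      a = u ∧ ∃ p ∈ admissiblePairs D loopFree u,
        b = u + eVec k p.1 ∧ IsBWalkFromTo D loopFree (nextPt u p) ν m w := by
  have last_eq : (Fin.last (2 * (m + 1)) : Fin (2 * m + 1 + 1 + 1)) = (Fin.last (2 * m)).succ.succ :=
    rfl
  have hall : (∀ t, D ((Fin.cons a (Fin.cons b w) : Fin (2 * (m + 1) + 1) → Pt k) t)) ↔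
      D a ∧ D b ∧ ∀ t, D (w t) :=
    (forall_cons_iff D a _).trans (and_congr_right fun _ => forall_cons_iff D b w)
  simp only [IsBWalkFromTo, hall, Fin.cons_zero, Fin.cons_succ, alternates_cons,
    loopFree_cons_cons, last_eq, mem_admissiblePairs]
  constructor
  · rintro ⟨rfl, ⟨hDa, hDb, hDw⟩, ⟨⟨i, hi⟩, ⟨j, hj⟩, halt⟩, hloop, hlast⟩
    have hb : b = a + eVec k i := by rw [← hi]; abel
    have hw0 : w 0 = nextPt a (i, j) := by
      rw [nextPt, ← hb, ← neg_neg (eVec k j), ← hj]; abel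
    refine ⟨rfl, (i, j), ⟨fun hlf hl => (hloop hlf).1 ?_, hDa, hb ▸ hDb, hw0 ▸ hDw 0⟩, hb,
      hw0, hDw, halt, fun hlf => (hloop hlf).2, hlast⟩
    exact ⟨hi.trans hl.1, hj.trans (congrArg Neg.neg hl.2)⟩
  · rintro ⟨rfl, ⟨i, j⟩, ⟨hnl, hDa, hDb, -⟩, rfl, hw0, hDw, halt, hloop, hlast⟩
    have hi : a + eVec k i - a = eVec k i := by abel
    have hj : w 0 - (a + eVec k i) = -eVec k j := by rw [hw0, nextPt]; abel
    refine ⟨rfl, ⟨hDa, hDb, hDw⟩, ⟨⟨i, hi⟩, ⟨j, hj⟩, halt⟩, fun hlf => ⟨?_, hloop hlf⟩, hlast⟩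
    rw [hi, hj, neg_inj]
    exact hnl hlf

end Walks

theorem Commute.sub_pow_eq_sum {R : Type*} [Ring R] {a b : R} (h : Commute a b) (n : ℕ) :
    (a - b) ^ n = ∑ m ∈ range (n + 1), ((-1) ^ m * n.choose m : ℤ) • (b ^ m * a ^ (n - m)) := by
  rw [sub_eq_neg_add, h.symm.neg_left.add_pow]
  refine sum_congr rfl fun m _ => ?_
  rw [neg_pow, zsmul_eq_mul, Int.cast_mul, Int.cast_pow, Int.cast_neg, Int.cast_one,
    Int.cast_natCast, mul_assoc, mul_assoc, mul_assoc, Nat.cast_comm, mul_assoc]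

section Transfer
variable {k : ℕ} (D : Pt k → Prop)

noncomputable def transfer (loopFree : Bool) : Module.End ℤ (Pt k → ℤ) :=
  LinearMap.pi fun u => ∑ p ∈ admissiblePairs D loopFree u, LinearMap.proj (nextPt u p)

noncomputable def restrictTo : Module.End ℤ (Pt k → ℤ) :=
  open scoped Classical in
  LinearMap.pi fun u => if D u then LinearMap.proj u else 0

variable {D}

theorem transfer_apply (loopFree : Bool) (g : Pt k → ℤ) (u : Pt k) :
    transfer D loopFree g u = ∑ p ∈ admissiblePairs D loopFree u, g (nextPt u p) := by
  simp [transfer]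

theorem restrictTo_apply_of_pos {u : Pt k} (hu : D u) (g : Pt k → ℤ) : restrictTo D g u = g u := by
  simp [restrictTo, hu]

theorem restrictTo_apply_of_neg {u : Pt k} (hu : ¬D u) (g : Pt k → ℤ) : restrictTo D g u = 0 := by
  simp [restrictTo, hu]

theorem admissiblePairs_of_not_mem {loopFree : Bool} {u : Pt k} (hu : ¬D u) :
    admissiblePairs D loopFree u = ∅ :=
  eq_empty_of_forall_notMem fun _ hp => hu (mem_admissiblePairs.1 hp).2.1

theorem restrictTo_mul_transfer (loopFree : Bool) :
    restrictTo D * transfer D loopFree = transfer D loopFree := by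
  ext g u
  by_cases hu : D u
  · exact restrictTo_apply_of_pos hu _
  · rw [Module.End.mul_apply, restrictTo_apply_of_neg hu, transfer_apply,
      admissiblePairs_of_not_mem hu, sum_empty]

theorem transfer_mul_restrictTo (loopFree : Bool) :
    transfer D loopFree * restrictTo D = transfer D loopFree := by
  ext g u
  rw [Module.End.mul_apply, transfer_apply, transfer_apply]
  exact sum_congr rfl fun p hp =>
    restrictTo_apply_of_pos (mem_admissiblePairs.1 hp).2.2.2 g

theorem restrictTo_pow_apply {u : Pt k} (hu : D u) (n : ℕ) (g : Pt k → ℤ) :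
    (restrictTo D ^ n) g u = g u := by
  induction n with
  | zero => rfl
  | succ n ih => rw [pow_succ', Module.End.mul_apply, restrictTo_apply_of_pos hu, ih]

def loopPair (hk : 2 ≤ k) : Fin k × Fin k := (⟨1, hk⟩, ⟨1, hk⟩)

theorem isLoopPair_iff (hk : 2 ≤ k) {p : Fin k × Fin k} : IsLoopPair p ↔ p = loopPair hk := by
  rw [IsLoopPair, ← eVec_one hk, eVec_injective.eq_iff, eVec_injective.eq_iff, Prod.ext_iff]
  rfl

theorem nextPt_loopPair (hk : 2 ≤ k) (u : Pt k) : nextPt u (loopPair hk) = u :=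
  add_sub_cancel_right u _

/-- The loop `(+e_1, -e_1)` is admissible from every point of `D` and returns to it. -/
theorem transfer_false_eq (hk : 2 ≤ k) (hD : ∀ u, D u → D (u + eOne k)) :
    transfer D false = transfer D true + restrictTo D := by
  classical
  ext g u
  rw [LinearMap.add_apply, Pi.add_apply, transfer_apply, transfer_apply,
    ← sum_filter_not_add_sum_filter _ IsLoopPair]
  congr 1
  · congr 1
    ext p
    simp only [mem_filter, mem_admissiblePairs]
    tauto
  · by_cases hu : D u
    · have : (admissiblePairs D false u).filter IsLoopPair = {loopPair hk} := by
        ext p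
        rw [mem_filter, mem_singleton, mem_admissiblePairs, isLoopPair_iff hk]
        constructor
        · exact fun h => h.2
        · rintro rfl
          refine ⟨⟨nofun, hu, ?_, ?_⟩, rfl⟩
          · rw [loopPair, eVec_one hk]; exact hD u hu
          · rwa [nextPt_loopPair]
      rw [restrictTo_apply_of_pos hu, this, sum_singleton, nextPt_loopPair]
    · rw [restrictTo_apply_of_neg hu, admissiblePairs_of_not_mem hu, filter_empty, sum_empty]

theorem transfer_true_pow_apply (hk : 2 ≤ k) (hD : ∀ u, D u → D (u + eOne k)) {u : Pt k}
    (hu : D u) (ℓ : ℕ) (g : Pt k → ℤ) :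
    (transfer D true ^ ℓ) g u =
      ∑ h ∈ range (ℓ + 1), (-1) ^ h * (ℓ.choose h : ℤ) * (transfer D false ^ (ℓ - h)) g u := by
  have hcomm : Commute (transfer D false) (restrictTo D) :=
    (transfer_mul_restrictTo false).trans (restrictTo_mul_transfer false).symm
  rw [show transfer D true = transfer D false - restrictTo D by
      rw [transfer_false_eq hk hD, add_sub_cancel_right],
    hcomm.sub_pow_eq_sum, LinearMap.sum_apply, Finset.sum_apply]
  refine sum_congr rfl fun h _ => ?_
  rw [LinearMap.smul_apply, Pi.smul_apply, Module.End.mul_apply, restrictTo_pow_apply hu,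
    smul_eq_mul]

end Transfer

section Decomposition
variable {k : ℕ} {D : Pt k → Prop} {loopFree : Bool} {u ν : Pt k} {m : ℕ}

def prependPair
    (x : Σ p : admissiblePairs D loopFree u, {w // IsBWalkFromTo D loopFree (nextPt u p) ν m w}) :
    {v // IsBWalkFromTo D loopFree u ν (m + 1) v} :=
  ⟨Fin.cons u (Fin.cons (u + eVec k x.1.1.1) x.2.1),
    (isBWalkFromTo_cons_cons _ _ _).2 ⟨rfl, x.1.1, x.1.2, rfl, x.2.2⟩⟩

theorem prependPair_bijective :
    Function.Bijective (prependPair (D := D) (loopFree := loopFree) (u := u) (ν := ν) (m := m)) := by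
  constructor
  · rintro ⟨⟨p, hp⟩, ⟨w, hw⟩⟩ ⟨⟨p', hp'⟩, ⟨w', hw'⟩⟩ h
    have h' : (Fin.cons u (Fin.cons (u + eVec k p.1) w) : Fin (2 * (m + 1) + 1) → Pt k) =
        Fin.cons u (Fin.cons (u + eVec k p'.1) w') := Subtype.ext_iff.1 h
    obtain ⟨h1, rfl⟩ := Fin.cons_injective2 (Fin.cons_injective2 h').2
    have hp1 : p.1 = p'.1 := eVec_injective (add_left_cancel h1)
    have hp2 : p.2 = p'.2 := by
      have hnext : nextPt u p = nextPt u p' := hw.1.symm.trans hw'.1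
      rw [nextPt, nextPt, hp1] at hnext
      exact eVec_injective (sub_right_injective hnext)
    obtain rfl : p = p' := Prod.ext hp1 hp2
    rfl
  · rintro ⟨v, hv⟩
    rw [← Fin.cons_self_tail v, ← Fin.cons_self_tail (Fin.tail v)] at hv
    obtain ⟨ha, p, hp, hb, hw⟩ := (isBWalkFromTo_cons_cons _ _ _).1 hv
    refine ⟨⟨⟨p, hp⟩, ⟨_, hw⟩⟩, Subtype.ext ?_⟩
    change Fin.cons u (Fin.cons (u + eVec k p.1) (Fin.tail (Fin.tail v))) = v
    rw [← hb, ← ha, Fin.cons_self_tail, Fin.cons_self_tail]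

theorem finite_bWalks (D : Pt k → Prop) (loopFree : Bool) (u ν : Pt k) (m : ℕ) :
    Finite {v // IsBWalkFromTo D loopFree u ν m v} := by
  induction m generalizing u with
  | zero =>
    refine @Finite.of_subsingleton _ ⟨fun v w => Subtype.ext (funext fun t => ?_)⟩
    obtain rfl : t = 0 := Fin.ext (by omega)
    exact v.2.1.trans w.2.1.symm
  | succ m ih => exact Finite.of_surjective _ prependPair_bijective.2

end Decomposition

section Counting
variable {k : ℕ}

theorem bWalkCount_succ (D : Pt k → Prop) (loopFree : Bool) (ν : Pt k) (m : ℕ) :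
    bWalkCount D loopFree ν (m + 1) = transfer D loopFree (bWalkCount D loopFree ν m) := by
  funext u
  have : ∀ p : admissiblePairs D loopFree u,
      Finite {w // IsBWalkFromTo D loopFree (nextPt u p) ν m w} :=
    fun _ => finite_bWalks D loopFree _ ν m
  rw [transfer_apply, bWalkCount, ← Nat.card_eq_of_bijective _ prependPair_bijective,
    Nat.card_sigma, Nat.cast_sum]
  exact sum_coe_sort (admissiblePairs D loopFree u) fun p => bWalkCount D loopFree ν m (nextPt u p)

theorem bWalkCount_eq_pow (D : Pt k → Prop) (loopFree : Bool) (ν : Pt k) (m : ℕ) :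
    bWalkCount D loopFree ν m = (transfer D loopFree ^ m) (bWalkCount D loopFree ν 0) := by
  induction m with
  | zero => rfl
  | succ m ih => rw [bWalkCount_succ, ih, pow_succ', Module.End.mul_apply]

theorem bWalkCount_true_zero (D : Pt k → Prop) (ν : Pt k) :
    bWalkCount D true ν 0 = bWalkCount D false ν 0 := by
  funext u
  refine congrArg Nat.cast (Nat.card_congr (Equiv.subtypeEquivRight fun v => ?_))
  simp [IsBWalkFromTo, loopFree_of_length_zero v]

theorem isPWalk_cons_iff {D : Pt k → Prop} {n : ℕ} (a : Pt k) (w : Fin (n + 1) → Pt k) :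
    IsPWalk D (n + 1) (Fin.cons a w) ↔
      a = delta k ∧ D a ∧ minusStep (w 0 - a) ∧ (∀ t, D (w t)) ∧
        Alternates plusStep minusStep w := by
  rw [isPWalk_iff, Fin.cons_zero, forall_cons_iff, alternates_cons]
  tauto

theorem sigmaStarCount_eq_bWalkCount (ℓ : ℕ) (ν : Pt k) :
    (sigmaStarCount k (2 * ℓ) ν : ℤ) = bWalkCount inW true ν ℓ (delta k) := by
  refine congrArg Nat.cast (Nat.card_congr (Equiv.subtypeEquivRight fun v => ?_))
  simp [isBWalk_iff, IsBWalkFromTo, and_assoc]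

/-- Since `δ` is the minimum of `W_{k-1}`, the first step of a `𝒫_W`-walk is forced to be
`-e_0 = 0`; the rest is a `ℬ_W`-walk. -/
theorem omegaCount_odd_eq_bWalkCount (hk : 0 < k) (m : ℕ) (ν : Pt k) :
    (omegaCount k (2 * m + 1) ν : ℤ) = bWalkCount inW false ν m (delta k) := by
  have hcons (w : Fin (2 * m + 1) → Pt k) (hw : IsBWalkFromTo inW false (delta k) ν m w) :
      IsPWalk inW (2 * m + 1) (Fin.cons (delta k) w) ∧
        (Fin.cons (delta k) w : Fin (2 * m + 2) → Pt k) (Fin.last _) = ν := by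
    obtain ⟨hw0, hW, halt, -, hlast⟩ := hw
    refine ⟨(isPWalk_cons_iff _ _).2 ⟨rfl, inW_delta k, ⟨⟨0, hk⟩, ?_⟩, hW, halt⟩, hlast⟩
    rw [hw0, sub_self, eVec_of_val_eq_zero rfl, neg_zero]
  refine congrArg Nat.cast (Nat.card_eq_of_bijective
    (fun w => ⟨Fin.cons (delta k) w.1, hcons w.1 w.2⟩) ⟨fun w w' h => ?_, ?_⟩).symm
  · exact Subtype.ext (Fin.cons_right_injective (α := fun _ => Pt k) _ (congrArg Subtype.val h))
  · rintro ⟨v, hv, hlast⟩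
    rw [← Fin.cons_self_tail v] at hv hlast
    obtain ⟨h0, -, hstep, hW, halt⟩ := (isPWalk_cons_iff _ _).1 hv
    rw [h0] at hstep
    refine ⟨⟨Fin.tail v, eq_delta_of_minusStep hstep (hW 0), hW, halt,
      fun h => (Bool.false_ne_true h).elim, hlast⟩, Subtype.ext ?_⟩
    change Fin.cons (delta k) (Fin.tail v) = v
    rw [← h0, Fin.cons_self_tail]

end Counting

theorem sigmaStar_even_formula_general (k ℓ : ℕ) (hk : 3 ≤ k) (ν : Pt k) :
    (sigmaStarCount k (2 * ℓ) ν : ℤ) =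
      ∑ h ∈ Finset.range (ℓ + 1),
        (-1) ^ h * (ℓ.choose h : ℤ) * (omegaCount k (2 * (ℓ - h) + 1) ν : ℤ) := by
  rw [sigmaStarCount_eq_bWalkCount, bWalkCount_eq_pow, bWalkCount_true_zero,
    transfer_true_pow_apply (by omega) (fun _ => inW_add_eOne) (inW_delta k)]
  refine sum_congr rfl fun h _ => ?_
  rw [omegaCount_odd_eq_bWalkCount (by omega), bWalkCount_eq_pow inW false ν (ℓ - h)]

/-- `σ^{ν;*}_{k,2ℓ} = Σ_{h=0}^{ℓ} (-1)^h C(ℓ,h) ω^ν_{k,2(ℓ-h)+1}`. -/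
theorem sigmaStar_even_formula (k ℓ : ℕ) (hk : 3 ≤ k) (ν : Pt k) (hν : inW ν) :
    (sigmaStarCount k (2 * ℓ) ν : ℤ) =
      ∑ h ∈ Finset.range (ℓ + 1),
        (-1) ^ h * (ℓ.choose h : ℤ) * (omegaCount k (2 * (ℓ - h) + 1) ν : ℤ) :=
  sigmaStar_even_formula_general k ℓ hk ν
end

section
/- Let k = 4. For every length ℓ ≥ 0 and every (i,j,r) ∈ W_3 (that is, integers i > j > r ≥ 0), ω^{(i,j,r)}_{4,ℓ} = a^{(i,j,r)}_{4,ℓ} − a^{(j,i,r)}_{4,ℓ} − a^{(r,j,i)}_{4,ℓ} − a^{(i,r,j)}_{4,ℓ} + a^{(j,r,i)}_{4,ℓ} + a^{(r,i,j)}_{4,ℓ}. -/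
open Finset

/-!
This is the reflection principle of André and Gessel–Zeilberger. The steps `±e_i` and the
orthant `Q` are invariant under permuting coordinates, and one step changes a difference
`x_a - x_b` by at most one, so a `Q`-walk from `δ` stays in the Weyl chamber `W` exactly when it
never meets a wall `x_a = x_b`. Reflecting a walk in the first wall it meets, from that time on,
is an involution that keeps the contact data and composes the endpoint with a transposition.
In `∑_π sgn(π) a^{ν ∘ π}` the walks meeting a wall therefore cancel, and what is left are the
`W`-walks ending at `ν`. For `k = 4` the sum over `S_3` has the six terms of the theorem.
-/

open Equiv Function

section Steps

variable {k : ℕ}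

lemma eVec_apply_eq_zero_or_one (m : Fin k) (c : Fin (k - 1)) :
    eVec k m c = 0 ∨ eVec k m c = 1 := by
  unfold eVec; split_ifs <;> simp

lemma exists_eVec_comp_perm (m : Fin k) (π : Perm (Fin (k - 1))) :
    ∃ m', eVec k m ∘ π = eVec k m' := by
  by_cases hm : (m : ℕ) = 0
  · exact ⟨m, funext fun c => by simp [eVec, hm]⟩
  obtain ⟨j, hj⟩ : ∃ j : Fin (k - 1), (j : ℕ) + 1 = m := ⟨⟨m - 1, by omega⟩, by simp; omega⟩
  refine ⟨⟨π.symm j + 1, by omega⟩, funext fun c => ?_⟩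
  simp only [eVec, comp_apply, ← hj, add_left_inj, Fin.val_inj, eq_symm_apply]

lemma plusStep.comp_perm {d : Pt k} (hd : plusStep d) (π : Perm (Fin (k - 1))) :
    plusStep (d ∘ π) := by
  obtain ⟨m, rfl⟩ := hd
  exact exists_eVec_comp_perm m π

lemma minusStep.comp_perm {d : Pt k} (hd : minusStep d) (π : Perm (Fin (k - 1))) :
    minusStep (d ∘ π) := by
  obtain ⟨m, rfl⟩ := hd
  obtain ⟨m', hm'⟩ := exists_eVec_comp_perm m π
  exact ⟨m', by rw [← hm']; rfl⟩

end Steps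

section Walks

variable {k ℓ : ℕ} {D : Pt k → Prop} {v : Fin (ℓ + 1) → Pt k}

lemma strictAnti_delta : StrictAnti (delta k) := fun a b hab => by
  simp only [delta]; have : (a : ℕ) < b := hab; omega

lemma IsPWalk.step (hv : IsPWalk D ℓ v) (t : ℕ) (h : t + 1 < ℓ + 1) :
    ∃ m : Fin k, v ⟨t + 1, h⟩ - v ⟨t, by omega⟩ = eVec k m ∨
      v ⟨t + 1, h⟩ - v ⟨t, by omega⟩ = -eVec k m := by
  rcases Nat.even_or_odd (t + 1) with he | ho
  · obtain ⟨m, hm⟩ := (hv.2.2 t h).2 he; exact ⟨m, .inl hm⟩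
  · obtain ⟨m, hm⟩ := (hv.2.2 t h).1 ho; exact ⟨m, .inr hm⟩

lemma IsPWalk.apply_succ_le (hv : IsPWalk D ℓ v) (t : ℕ) (h : t + 1 < ℓ + 1)
    (c : Fin (k - 1)) : v ⟨t + 1, h⟩ c ≤ v ⟨t, by omega⟩ c + 1 := by
  obtain ⟨m, hm | hm⟩ := hv.step t h <;> have hc := congrFun hm c <;>
    rcases eVec_apply_eq_zero_or_one m c with h0 | h0 <;> simp_all <;> omega

lemma IsPWalk.sub_le_sub_succ_add_one (hv : IsPWalk D ℓ v) (t : ℕ) (h : t + 1 < ℓ + 1)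
    (a b : Fin (k - 1)) :
    v ⟨t, by omega⟩ a - v ⟨t, by omega⟩ b ≤ v ⟨t + 1, h⟩ a - v ⟨t + 1, h⟩ b + 1 := by
  obtain ⟨m, hm | hm⟩ := hv.step t h <;> have ha := congrFun hm a <;> have hb := congrFun hm b <;>
    rcases eVec_apply_eq_zero_or_one m a with h0 | h0 <;>
    rcases eVec_apply_eq_zero_or_one m b with h1 | h1 <;> simp_all <;> omega

lemma IsPWalk.apply_le (hv : IsPWalk D ℓ v) (t : Fin (ℓ + 1)) (c : Fin (k - 1)) :
    v t c ≤ delta k c + t := by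
  obtain ⟨t, ht⟩ := t
  induction t with
  | zero => exact (congrFun hv.1 c).le.trans (by simp)
  | succ t ih =>
    have hstep := hv.apply_succ_le t ht c
    have hprev := ih (by omega)
    push_cast at hprev ⊢; omega

lemma IsPWalk.strictAnti_of_injective (hv : IsPWalk D ℓ v) (hinj : ∀ t, Injective (v t))
    (t : Fin (ℓ + 1)) : StrictAnti (v t) := by
  obtain ⟨t, ht⟩ := t
  induction t with
  | zero => exact hv.1 ▸ strictAnti_delta
  | succ t ih =>
    intro a b hab
    have hlt := ih (by omega) hab
    have hle := hv.sub_le_sub_succ_add_one t ht a b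
    have hne := (hinj ⟨t + 1, ht⟩).ne hab.ne'
    omega

lemma isPWalk_inW_iff :
    IsPWalk inW ℓ v ↔ IsPWalk inQ ℓ v ∧ ∀ t, Injective (v t) := by
  constructor
  · rintro ⟨h0, hW, hsteps⟩
    exact ⟨⟨h0, fun t => (hW t).2, hsteps⟩, fun t => (hW t).1.injective⟩
  · rintro ⟨hv, hinj⟩
    exact ⟨hv.1, fun t => ⟨hv.strictAnti_of_injective hinj t, hv.2.1 t⟩, hv.2.2⟩

variable (k ℓ) in
lemma finite_setOf_isPWalk_inQ : {v : Fin (ℓ + 1) → Pt k | IsPWalk inQ ℓ v}.Finite := by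
  refine (Set.Finite.pi fun _ => Set.Finite.pi fun c =>
    Set.finite_Icc 0 (delta k c + ℓ)).subset ?_
  intro v hv t _ c _
  exact ⟨hv.2.1 t c, (hv.apply_le t c).trans (by have := t.isLt; omega)⟩

end Walks

section Contact

variable {n m : ℕ} {α : Type*}

abbrev Wall (n : ℕ) := {p : Fin n × Fin n // p.1 ≠ p.2}

def Wall.swap (w : Wall n) : Perm (Fin n) := Equiv.swap w.1.1 w.1.2

lemma Wall.sign_swap (w : Wall n) : Perm.sign w.swap = -1 := Perm.sign_swap w.2

lemma Wall.swap_mul_self (w : Wall n) : w.swap * w.swap = 1 := Equiv.swap_mul_self _ _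

open Classical in
noncomputable def wallOf (x : Fin n → α) : Option (Wall n) :=
  if h : ∃ w : Wall n, x w.1.1 = x w.1.2 then some h.choose else none

lemma wallOf_eq_none_iff {x : Fin n → α} : wallOf x = none ↔ Injective x := by
  simp only [wallOf, dite_eq_right_iff, reduceCtorEq, imp_false, not_exists, Injective]
  exact ⟨fun h a b hab => by_contra fun hne => h ⟨(a, b), hne⟩ hab,
    fun h w hw => w.2 (h hw)⟩

lemma comp_swap_of_wallOf_eq_some {x : Fin n → α} {w : Wall n} (h : wallOf x = some w) :
    x ∘ w.swap = x := by
  unfold wallOf at h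
  split_ifs at h with hx
  cases h
  funext c
  rw [comp_apply, Wall.swap, swap_apply_def]
  split_ifs <;> simp_all [hx.choose_spec]

open Classical in
noncomputable def firstContact (v : Fin m → Fin n → α) : Option (Fin m × Wall n) :=
  if h : ∃ t, (wallOf (v t)).isSome then
    some (Fin.find _ h, (wallOf (v (Fin.find _ h))).get (Fin.find_spec h))
  else none

lemma firstContact_eq_some_iff {v : Fin m → Fin n → α} {T : Fin m} {w : Wall n} :
    firstContact v = some (T, w) ↔ wallOf (v T) = some w ∧ ∀ t < T, wallOf (v t) = none := by
  unfold firstContact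
  split_ifs with h
  · simp only [Option.some.injEq, Prod.mk.injEq]
    constructor
    · rintro ⟨rfl, rfl⟩
      exact ⟨by simp, fun t ht => by simpa using Fin.find_min h ht⟩
    · rintro ⟨hT, hlt⟩
      have hfind : Fin.find _ h = T :=
        (Fin.find_eq_iff h).2 ⟨by simp [hT], fun t ht => by simp [hlt t ht]⟩
      subst hfind
      simp [hT]
  · push Not at h
    simp only [false_iff, not_and]
    intro hT
    simpa [hT] using h T

lemma firstContact_eq_none_iff {v : Fin m → Fin n → α} :
    firstContact v = none ↔ ∀ t, wallOf (v t) = none := by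
  unfold firstContact
  split_ifs with h <;> simp_all [Option.isSome_iff_ne_none]

def reflectFrom (T : Fin m) (σ : Perm (Fin n)) (v : Fin m → Fin n → α) : Fin m → Fin n → α :=
  fun s => if T ≤ s then v s ∘ σ else v s

variable {T s : Fin m} {σ : Perm (Fin n)} {v : Fin m → Fin n → α}

lemma reflectFrom_of_ge (hs : T ≤ s) : reflectFrom T σ v s = v s ∘ σ := if_pos hs

lemma reflectFrom_of_le (hT : v T ∘ σ = v T) (hs : s ≤ T) : reflectFrom T σ v s = v s := by
  unfold reflectFrom
  split_ifs with h
  · rw [le_antisymm hs h, hT]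
  · rfl

lemma reflectFrom_reflectFrom (hσ : σ * σ = 1) : reflectFrom T σ (reflectFrom T σ v) = v := by
  funext s
  unfold reflectFrom
  split_ifs
  · rw [comp_assoc, ← Perm.coe_mul, hσ, Perm.coe_one, comp_id]
  · rfl

lemma firstContact_reflectFrom {w : Wall n} (h : firstContact v = some (T, w)) :
    firstContact (reflectFrom T w.swap v) = some (T, w) := by
  rw [firstContact_eq_some_iff] at h ⊢
  have hfix := comp_swap_of_wallOf_eq_some h.1
  exact ⟨by rw [reflectFrom_of_le hfix le_rfl, h.1],
    fun t ht => by rw [reflectFrom_of_le hfix ht.le, h.2 t ht]⟩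

end Contact

lemma inQ_comp {k : ℕ} {x : Pt k} (hx : inQ x) (π : Perm (Fin (k - 1))) : inQ (x ∘ π) :=
  fun c => hx (π c)

lemma IsPWalk.reflectFrom {k ℓ : ℕ} {D : Pt k → Prop} {v : Fin (ℓ + 1) → Pt k}
    (hD : ∀ x, D x → ∀ π : Perm (Fin (k - 1)), D (x ∘ π)) (hv : IsPWalk D ℓ v)
    {T : Fin (ℓ + 1)} {σ : Perm (Fin (k - 1))} (hT : v T ∘ σ = v T) :
    IsPWalk D ℓ (reflectFrom T σ v) := by
  refine ⟨(reflectFrom_of_le hT (Fin.le_def.2 (Nat.zero_le _))).trans hv.1, fun s => ?_,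
    fun t h => ?_⟩
  · by_cases hs : T ≤ s
    · rw [reflectFrom_of_ge hs]; exact hD _ (hv.2.1 s) σ
    · simp only [_root_.reflectFrom, if_neg hs]; exact hv.2.1 s
  · obtain ⟨π, hπ⟩ : ∃ π : Perm (Fin (k - 1)),
        _root_.reflectFrom T σ v ⟨t + 1, h⟩ - _root_.reflectFrom T σ v ⟨t, by omega⟩ =
          (v ⟨t + 1, h⟩ - v ⟨t, by omega⟩) ∘ π := by
      by_cases hTt : (T : ℕ) ≤ t
      · refine ⟨σ, ?_⟩
        rw [reflectFrom_of_ge (s := ⟨t, by omega⟩) hTt,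
          reflectFrom_of_ge (s := ⟨t + 1, h⟩) (by simp [Fin.le_def]; omega)]
        rfl
      · refine ⟨1, ?_⟩
        rw [reflectFrom_of_le hT (s := ⟨t, by omega⟩) (by simp [Fin.le_def]; omega),
          reflectFrom_of_le hT (s := ⟨t + 1, h⟩) (by simp [Fin.le_def]; omega)]
        rfl
    rw [hπ]
    exact ⟨fun ho => ((hv.2.2 t h).1 ho).comp_perm π, fun he => ((hv.2.2 t h).2 he).comp_perm π⟩

section Counting

variable {k ℓ : ℕ}

lemma sum_sign_mul_comp_eq_zero {n : ℕ} {β : Type*} (f : (Fin n → β) → ℤ) (τ : Perm (Fin n))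
    (hτ : Perm.sign τ = -1) (hf : ∀ μ, f (μ ∘ τ) = f μ) (ν : Fin n → β) :
    ∑ π : Perm (Fin n), (Perm.sign π : ℤ) * f (ν ∘ π) = 0 := by
  have h : ∑ π : Perm (Fin n), (Perm.sign π : ℤ) * f (ν ∘ π) =
      -∑ π : Perm (Fin n), (Perm.sign π : ℤ) * f (ν ∘ π) := calc
    _ = ∑ π : Perm (Fin n), (Perm.sign (π * τ) : ℤ) * f (ν ∘ ⇑(π * τ)) :=
      (Fintype.sum_equiv (Equiv.mulRight τ) _ _ fun _ => rfl).symm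
    _ = _ := by simp [Perm.sign_mul, hτ, Perm.coe_mul, ← comp_assoc, hf]
  linarith

lemma eq_one_of_strictAnti_comp {n : ℕ} {β : Type*} [LinearOrder β] {ν : Fin n → β}
    (hν : StrictAnti ν) {π : Perm (Fin n)} (h : StrictAnti (ν ∘ π)) : π = 1 :=
  Equiv.ext fun _ => StrictMono.apply_eq (f := π) fun _ _ hab => hν.lt_iff_gt.1 (h hab)

variable (k ℓ) in
noncomputable def qWalks (μ : Pt k) : Finset (Fin (ℓ + 1) → Pt k) :=
  {v ∈ (finite_setOf_isPWalk_inQ k ℓ).toFinset | v (Fin.last ℓ) = μ}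

lemma mem_qWalks {μ : Pt k} {v : Fin (ℓ + 1) → Pt k} :
    v ∈ qWalks k ℓ μ ↔ IsPWalk inQ ℓ v ∧ v (Fin.last ℓ) = μ := by
  simp [qWalks]

lemma aCount_eq_card_qWalks (μ : Pt k) : aCount k ℓ μ = #(qWalks k ℓ μ) :=
  (Nat.card_congr (Equiv.subtypeEquivRight fun _ => mem_qWalks.symm)).trans
    (Nat.card_eq_finsetCard _)

lemma omegaCount_eq_card_filter_firstContact_eq_none (μ : Pt k) :
    omegaCount k ℓ μ = #{v ∈ qWalks k ℓ μ | firstContact v = none} := by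
  refine (Nat.card_congr (Equiv.subtypeEquivRight fun v => ?_)).trans (Nat.card_eq_finsetCard _)
  simp only [mem_filter, mem_qWalks, isPWalk_inW_iff, firstContact_eq_none_iff,
    wallOf_eq_none_iff]
  tauto

lemma omegaCount_eq_zero_of_not_strictAnti {μ : Pt k} (hμ : ¬StrictAnti μ) :
    omegaCount k ℓ μ = 0 :=
  Nat.card_eq_zero.2 <| .inl ⟨fun ⟨_, hv, hend⟩ => hμ (hend ▸ (hv.2.1 _).1)⟩

lemma card_filter_firstContact_eq_some_comp_swap (μ : Pt k) (T : Fin (ℓ + 1))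
    (w : Wall (k - 1)) :
    #{v ∈ qWalks k ℓ (μ ∘ w.swap) | firstContact v = some (T, w)} =
      #{v ∈ qWalks k ℓ μ | firstContact v = some (T, w)} := by
  have hmaps : ∀ μ : Pt k, ∀ v ∈ {v ∈ qWalks k ℓ μ | firstContact v = some (T, w)},
      reflectFrom T w.swap v ∈ {v ∈ qWalks k ℓ (μ ∘ w.swap) | firstContact v = some (T, w)} := by
    intro μ v hv
    simp only [mem_filter, mem_qWalks] at hv ⊢
    obtain ⟨⟨hv, hend⟩, hc⟩ := hv
    have hfix := comp_swap_of_wallOf_eq_some (firstContact_eq_some_iff.1 hc).1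
    exact ⟨⟨hv.reflectFrom (fun _ hx π => inQ_comp hx π) hfix,
      by rw [reflectFrom_of_ge (Fin.le_last T), hend]⟩, firstContact_reflectFrom hc⟩
  refine card_nbij' (reflectFrom T w.swap) (reflectFrom T w.swap) (fun v hv => ?_)
    (hmaps μ) (fun _ _ => reflectFrom_reflectFrom w.swap_mul_self)
    (fun _ _ => reflectFrom_reflectFrom w.swap_mul_self)
  simpa [comp_assoc, ← Perm.coe_mul, w.swap_mul_self] using hmaps _ v hv

lemma aCount_eq_omegaCount_add_sum_card_filter (μ : Pt k) :
    (aCount k ℓ μ : ℤ) = omegaCount k ℓ μ + ∑ c : Fin (ℓ + 1) × Wall (k - 1),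
      (#{v ∈ qWalks k ℓ μ | firstContact v = some c} : ℤ) := by
  rw [aCount_eq_card_qWalks, omegaCount_eq_card_filter_firstContact_eq_none,
    card_eq_sum_card_fiberwise (f := firstContact) (t := univ) fun _ _ => mem_univ _,
    Fintype.sum_option]
  push_cast; rfl

theorem sum_sign_mul_aCount_comp (k ℓ : ℕ) {ν : Pt k} (hν : StrictAnti ν) :
    ∑ π : Perm (Fin (k - 1)), (Perm.sign π : ℤ) * aCount k ℓ (ν ∘ π) = omegaCount k ℓ ν := by
  simp only [aCount_eq_omegaCount_add_sum_card_filter, mul_add, sum_add_distrib,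
    mul_sum]
  rw [sum_comm, Fintype.sum_eq_zero _ fun c => sum_sign_mul_comp_eq_zero
    (fun μ => (#{v ∈ qWalks k ℓ μ | firstContact v = some c} : ℤ)) c.2.swap c.2.sign_swap
    (fun μ => by rw [card_filter_firstContact_eq_some_comp_swap]) ν, add_zero,
    Fintype.sum_eq_single 1 fun π hπ => by
      rw [omegaCount_eq_zero_of_not_strictAnti fun h => hπ (eq_one_of_strictAnti_comp hν h)]
      simp]
  simp

end Counting

lemma sum_perm_fin_three {M : Type*} [AddCommMonoid M] (f : Perm (Fin 3) → M) :
    ∑ π, f π = f 1 + f (swap 0 1) + f (swap 1 2) + f (swap 0 2) + f (swap 0 1 * swap 1 2) +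
      f (swap 1 2 * swap 0 1) := by
  rw [show (univ : Finset (Perm (Fin 3))) =
      {1, swap 0 1, swap 1 2, swap 0 2, swap 0 1 * swap 1 2, swap 1 2 * swap 0 1} by decide,
    sum_insert (by decide), sum_insert (by decide), sum_insert (by decide),
    sum_insert (by decide), sum_insert (by decide), sum_singleton]
  abel

lemma sum_sign_mul_comp_fin_three {β : Type*} (f : (Fin 3 → β) → ℤ) (x y z : β) :
    ∑ π : Perm (Fin 3), (Perm.sign π : ℤ) * f (![x, y, z] ∘ π) =
      f ![x, y, z] - f ![y, x, z] - f ![x, z, y] - f ![z, y, x] + f ![y, z, x] + f ![z, x, y] := by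
  have hcomp : ∀ π : Perm (Fin 3),
      ![x, y, z] ∘ π = ![![x, y, z] (π 0), ![x, y, z] (π 1), ![x, y, z] (π 2)] :=
    fun π => funext fun c => by fin_cases c <;> rfl
  rw [sum_perm_fin_three]
  simp [hcomp, swap_apply_def, -Perm.coe_mul, Perm.mul_apply, sub_eq_add_neg]

theorem omega_four_reflection_general (ℓ : ℕ) (i j r : ℤ) (h1 : j < i) (h2 : r < j) :
    (omegaCount 4 ℓ ![i, j, r] : ℤ) =
      (aCount 4 ℓ ![i, j, r] : ℤ) - (aCount 4 ℓ ![j, i, r] : ℤ) -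
        (aCount 4 ℓ ![r, j, i] : ℤ) - (aCount 4 ℓ ![i, r, j] : ℤ) +
        (aCount 4 ℓ ![j, r, i] : ℤ) + (aCount 4 ℓ ![r, i, j] : ℤ) := by
  have h := sum_sign_mul_aCount_comp 4 ℓ (ν := ![i, j, r]) (by simp [h1, h2])
  rw [sum_sign_mul_comp_fin_three (fun μ => (aCount 4 ℓ μ : ℤ))] at h
  linarith

/-- for `k = 4` and `(i,j,r) ∈ W_3`,
`ω^{(i,j,r)}_{4,ℓ} = a^{(i,j,r)} - a^{(j,i,r)} - a^{(r,j,i)} - a^{(i,r,j)}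
 + a^{(j,r,i)} + a^{(r,i,j)}`. -/
theorem omega_four_reflection (ℓ : ℕ) (i j r : ℤ) (h1 : j < i) (h2 : r < j)
    (h3 : 0 ≤ r) :
    (omegaCount 4 ℓ ![i, j, r] : ℤ) =
      (aCount 4 ℓ ![i, j, r] : ℤ) - (aCount 4 ℓ ![j, i, r] : ℤ) -
        (aCount 4 ℓ ![r, j, i] : ℤ) - (aCount 4 ℓ ![i, r, j] : ℤ) +
        (aCount 4 ℓ ![j, r, i] : ℤ) + (aCount 4 ℓ ![r, i, j] : ℤ) :=
  omega_four_reflection_general ℓ i j r h1 h2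
end
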